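/- arXiv:1012.1908 — 8 statements merged into one kernel-verified Lean document; each statement's English description precedes it below -/
import Mathlib

section
/- If p : ℝⁿ → ℝ is a quasiconvex polynomial of odd degree d, then every superlevel set {x : p(x) ≥ α} is convex. -/
/-!
Let `h` be the top homogeneous component of `p`, of odd degree `d`. On a line `t ↦ x + t • w`
the restriction of `p` has `t ^ d` coefficient `h w`; if `h w < 0` it tends to `-∞`, and a
quasiconvex function of one variable tending to `-∞` at `+∞` is antitone. As `h (-w) = -h w`,
`p` is monotone or antitone on every line whose direction avoids the zero set of `h`. These
directions are dense and `min (p x) (p (x + w)) ≤ p (x + t • w)` is closed in `w`, so `p` is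
quasiconcave.
-/

open Filter Topology Set

theorem QuasiconvexOn.comp_affineMap {𝕜 E F β : Type*} [Ring 𝕜] [PartialOrder 𝕜]
    [AddCommGroup E] [Module 𝕜 E] [AddCommGroup F] [Module 𝕜 F] [LE β] {f : F → β}
    (hf : QuasiconvexOn 𝕜 univ f) (g : E →ᵃ[𝕜] F) : QuasiconvexOn 𝕜 univ (f ∘ g) :=
  fun r => by simpa using (hf r).affine_preimage g

section Quasiconvex

variable {𝕜 E β : Type*} [Field 𝕜] [LinearOrder 𝕜] [IsStrictOrderedRing 𝕜]
  [AddCommGroup E] [Module 𝕜 E] [Preorder β]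

theorem QuasiconvexOn.antitone_of_tendsto_atBot {f : 𝕜 → β} (hf : QuasiconvexOn 𝕜 univ f)
    (h : Tendsto f atTop atBot) : Antitone f := by
  intro s t hst
  obtain ⟨T, hTs, htT⟩ := ((h.eventually (eventually_le_atBot (f s))).and
    (eventually_ge_atTop t)).exists
  have hconv : Convex 𝕜 {u ∈ univ | f u ≤ f s} := hf (f s)
  exact (hconv.ordConnected.out ⟨mem_univ s, le_rfl⟩ ⟨mem_univ T, hTs⟩ ⟨hst, htT⟩).2

theorem QuasiconvexOn.antitone_of_tendsto_atBot_along {f : E → β}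
    (hf : QuasiconvexOn 𝕜 univ f) {x w : E}
    (h : Tendsto (fun t : 𝕜 => f (x + t • w)) atTop atBot) :
    Antitone fun t : 𝕜 => f (x + t • w) := by
  have hline : (fun t : 𝕜 => f (x + t • w)) = f ∘ AffineMap.lineMap x (x + w) := by
    ext t
    simp [AffineMap.lineMap_apply_module', add_comm]
  rw [hline] at h ⊢
  exact (hf.comp_affineMap _).antitone_of_tendsto_atBot h

end Quasiconvex

section Quasiconcave

variable {E β : Type*} [TopologicalSpace E] [AddCommGroup E] [Module ℝ E] [ContinuousAdd E]
  [ContinuousConstSMul ℝ E] [LinearOrder β] [TopologicalSpace β] [OrderClosedTopology β]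

theorem QuasiconvexOn.quasiconcaveOn_of_dense_tendsto_atBot {f : E → β}
    (hf : QuasiconvexOn ℝ univ f) (hcont : Continuous f) {U : Set E} (hU : Dense U)
    (hdesc : ∀ w ∈ U, ∀ x, Tendsto (fun t : ℝ => f (x + t • w)) atTop atBot ∨
      Tendsto (fun t : ℝ => f (x + t • -w)) atTop atBot) :
    QuasiconcaveOn ℝ univ f := by
  have hgood : ∀ x, ∀ w ∈ U, ∀ t ∈ Icc (0 : ℝ) 1,
      min (f x) (f (x + w)) ≤ f (x + t • w) := by
    intro x w hw t ⟨ht0, ht1⟩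
    rcases hdesc w hw x with hfwd | hbwd
    · have := hf.antitone_of_tendsto_atBot_along hfwd ht1
      simp only [one_smul] at this
      exact min_le_of_right_le this
    · have := hf.antitone_of_tendsto_atBot_along hbwd (neg_nonpos.mpr ht0)
      simp only [zero_smul, neg_zero, add_zero, smul_neg, neg_smul, neg_neg] at this
      exact min_le_of_left_le this
  have hall : ∀ x w, ∀ t ∈ Icc (0 : ℝ) 1, min (f x) (f (x + w)) ≤ f (x + t • w) := by
    intro x w t ht
    have hclosed : IsClosed {w | min (f x) (f (x + w)) ≤ f (x + t • w)} :=
      isClosed_le (by fun_prop) (by fun_prop)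
    exact hclosed.closure_subset_iff.mpr (fun w hw => hgood x w hw t ht)
      (hU.closure_eq ▸ mem_univ w)
  refine quasiconcaveOn_iff_min_le.mpr ⟨convex_univ, fun x _ y _ a b ha hb hab => ?_⟩
  have := hall x (y - x) b ⟨hb, by linarith⟩
  have hpt : a • x + b • y = x + b • (y - x) := by rw [eq_sub_of_add_eq hab]; module
  rwa [add_sub_cancel, ← hpt] at this

end Quasiconcave

namespace MvPolynomial

variable {σ : Type*}

theorem IsHomogeneous.eval_smul {R : Type*} [CommSemiring R] {φ : MvPolynomial σ R} {m : ℕ}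
    (hφ : φ.IsHomogeneous m) (c : R) (x : σ → R) :
    eval (c • x) φ = c ^ m * eval x φ := by
  rw [eval_eq, eval_eq, Finset.mul_sum]
  refine Finset.sum_congr rfl fun d hd => ?_
  have hdeg : ∑ i ∈ d.support, d i = m := by
    simpa [Finsupp.weight_apply, Finsupp.sum] using hφ (mem_support_iff.mp hd)
  simp only [Pi.smul_apply, smul_eq_mul, mul_pow, Finset.prod_mul_distrib,
    Finset.prod_pow_eq_pow_sum, hdeg]
  ring

theorem homogeneousComponent_totalDegree_ne_zero {R : Type*} [CommSemiring R]
    {p : MvPolynomial σ R} (hp : p ≠ 0) : homogeneousComponent p.totalDegree p ≠ 0 := by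
  obtain ⟨m, hm, hmdeg⟩ := p.support.exists_mem_eq_sup (support_nonempty.mpr hp)
    fun s => s.sum fun _ e => e
  intro hzero
  have hco := coeff_homogeneousComponent (n := p.totalDegree) (φ := p) m
  rw [hzero, if_pos (by rw [totalDegree, hmdeg]; rfl)] at hco
  exact mem_support_iff.mp hm hco.symm

theorem dense_setOf_eval_ne_zero [Fintype σ] {q : MvPolynomial σ ℝ} (hq : q ≠ 0) :
    Dense {x : σ → ℝ | eval x q ≠ 0} := by
  refine Metric.dense_iff.mpr fun x r hr => ?_
  by_contra hempty
  refine hq (funext_set (fun i => Metric.ball (x i) r)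
    (fun i => by simpa [Real.ball_eq_Ioo] using Ioo_infinite (by linarith)) fun y hy => ?_)
  rw [← ball_pi x hr] at hy
  by_contra hne
  exact hempty ⟨y, hy, by simpa using hne⟩

theorem eval_add_smul_eq_pow_mul {𝕜 : Type*} [Field 𝕜] (p : MvPolynomial σ 𝕜)
    (x w : σ → 𝕜) {t : 𝕜} (ht : t ≠ 0) :
    eval (x + t • w) p = t ^ p.totalDegree * ∑ i ∈ Finset.range (p.totalDegree + 1),
      t⁻¹ ^ (p.totalDegree - i) * eval (t⁻¹ • x + w) (homogeneousComponent i p) := by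
  have hxw : x + t • w = t • (t⁻¹ • x + w) := by
    rw [smul_add, smul_smul, mul_inv_cancel₀ ht, one_smul]
  conv_lhs => rw [← sum_homogeneousComponent p, hxw]
  rw [map_sum, Finset.mul_sum]
  refine Finset.sum_congr rfl fun i hi => ?_
  rw [(homogeneousComponent_isHomogeneous i p).eval_smul, inv_pow,
    ← pow_sub_mul_pow t (Nat.lt_succ_iff.mp (Finset.mem_range.mp hi))]
  field_simp

theorem tendsto_eval_add_smul_atBot (p : MvPolynomial σ ℝ) (hp : p.totalDegree ≠ 0)
    (x : σ → ℝ) {w : σ → ℝ} (hw : eval w (homogeneousComponent p.totalDegree p) < 0) :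
    Tendsto (fun t : ℝ => eval (x + t • w) p) atTop atBot := by
  let F : ℝ → ℝ := fun s => ∑ i ∈ Finset.range (p.totalDegree + 1),
    s ^ (p.totalDegree - i) * eval (s • x + w) (homogeneousComponent i p)
  have hF0 : F 0 = eval w (homogeneousComponent p.totalDegree p) := by
    refine (Finset.sum_eq_single_of_mem _ (Finset.self_mem_range_succ _)
      fun i hi hid => ?_).trans (by simp)
    have hlt : i < p.totalDegree := (Nat.lt_succ_iff.mp (Finset.mem_range.mp hi)).lt_of_ne hid
    rw [zero_pow (Nat.sub_ne_zero_of_lt hlt), zero_mul]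
  have hF : Tendsto (fun t : ℝ => F t⁻¹) atTop
      (𝓝 (eval w (homogeneousComponent p.totalDegree p))) :=
    have hFc : Continuous F := continuous_finsetSum _ fun i _ =>
      (continuous_pow _).mul ((continuous_eval _).comp (by fun_prop))
    hF0 ▸ (hFc.tendsto 0).comp tendsto_inv_atTop_zero
  refine ((tendsto_pow_atTop hp).atTop_mul_neg hw hF).congr' ?_
  filter_upwards [eventually_gt_atTop 0] with t ht
  exact (eval_add_smul_eq_pow_mul p x w ht.ne').symm

theorem tendsto_eval_add_smul_atBot_or_neg (p : MvPolynomial σ ℝ) (hodd : Odd p.totalDegree)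
    {w : σ → ℝ} (hw : eval w (homogeneousComponent p.totalDegree p) ≠ 0) (x : σ → ℝ) :
    Tendsto (fun t : ℝ => eval (x + t • w) p) atTop atBot ∨
      Tendsto (fun t : ℝ => eval (x + t • -w) p) atTop atBot := by
  rcases hw.lt_or_gt with hneg | hpos
  · exact .inl (tendsto_eval_add_smul_atBot p hodd.pos.ne' x hneg)
  · refine .inr (tendsto_eval_add_smul_atBot p hodd.pos.ne' x ?_)
    rw [← neg_one_smul ℝ w, (homogeneousComponent_isHomogeneous _ p).eval_smul,
      hodd.neg_one_pow]
    linarith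

end MvPolynomial

theorem stmt_1 (n : ℕ) (p : MvPolynomial (Fin n) ℝ) (hodd : Odd p.totalDegree)
    (hq : ∀ α : ℝ, Convex ℝ {x : Fin n → ℝ | MvPolynomial.eval x p ≤ α}) :
    ∀ α : ℝ, Convex ℝ {x : Fin n → ℝ | α ≤ MvPolynomial.eval x p} := by
  have hp : p ≠ 0 := by rintro rfl; simp at hodd
  have hquasi : QuasiconvexOn ℝ univ fun x => MvPolynomial.eval x p :=
    fun α => by simpa using hq α
  intro α
  simpa using hquasi.quasiconcaveOn_of_dense_tendsto_atBot (MvPolynomial.continuous_eval p)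
    (MvPolynomial.dense_setOf_eval_ne_zero
      (MvPolynomial.homogeneousComponent_totalDegree_ne_zero hp))
    (fun w hw x => MvPolynomial.tendsto_eval_add_smul_atBot_or_neg p hodd hw x) α
end

section
/- Let p : ℝⁿ → ℝ be a homogeneous polynomial of even degree d ≥ 2. If p is quasiconvex, then p is nonnegative everywhere. -/
theorem stmt_2 (n d : ℕ) (p : (Fin n → ℝ) → ℝ) (hd : Even d) (hd2 : 2 ≤ d)
    (hhom : ∀ (c : ℝ) (x : Fin n → ℝ), p (c • x) = c ^ d * p x)
    (hq : ∀ α : ℝ, Convex ℝ {x : Fin n → ℝ | p x ≤ α}) :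
    ∀ x : Fin n → ℝ, 0 ≤ p x := by
  intro x
  by_contra h
  push_neg at h
  have hneg : p (-x) = p x := by
    have := hhom (-1) x
    simpa [hd.neg_one_pow] using this
  have h0 : p 0 = 0 := by
    have := hhom 0 x
    have hd0 : d ≠ 0 := by omega
    simpa [zero_pow hd0] using this
  have hx : x ∈ {y : Fin n → ℝ | p y ≤ p x} := Set.mem_setOf_eq ▸ le_refl (p x)
  have hnx : -x ∈ {y : Fin n → ℝ | p y ≤ p x} := Set.mem_setOf_eq ▸ le_of_eq hneg
  have hmem := (hq (p x)) hx hnx (by norm_num : (0:ℝ) ≤ 1/2) (by norm_num : (0:ℝ) ≤ 1/2) (by norm_num)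
  have : (1/2 : ℝ) • x + (1/2 : ℝ) • (-x) = 0 := by module
  rw [this] at hmem
  simp only [Set.mem_setOf_eq, h0] at hmem
  linarith
end

section
/- Let p : ℝⁿ → ℝ be a continuous function that is homogeneous of even degree d ≥ 2 and quasiconvex. Then p is convex. -/
theorem stmt_3 (n d : ℕ) (p : (Fin n → ℝ) → ℝ) (hp : Continuous p)
    (hd : Even d) (hd2 : 2 ≤ d)
    (hhom : ∀ (c : ℝ) (x : Fin n → ℝ), p (c • x) = c ^ d * p x)
    (hq : ∀ α : ℝ, Convex ℝ {x : Fin n → ℝ | p x ≤ α}) :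
    ConvexOn ℝ Set.univ p := by
  have hd0 : d ≠ 0 := by omega
  have hp0 : p 0 = 0 := by
    have := hhom 0 0
    simpa [zero_pow hd0] using this
  have hpos : ∀ x, 0 ≤ p x := by
    intro x
    by_contra h
    push_neg at h
    have hneg : p (-x) ≤ p x := by
      have := hhom (-1) x
      simp [hd.neg_one_pow] at this
      simp [← this]  -- (-1) • x = -x
    have hx : x ∈ {y : Fin n → ℝ | p y ≤ p x} := Set.mem_setOf.2 le_rfl
    have hnx : -x ∈ {y : Fin n → ℝ | p y ≤ p x} := hneg
    have hm := hq (p x) hx hnx (by norm_num : (0:ℝ) ≤ 1/2)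
      (by norm_num : (0:ℝ) ≤ 1/2) (by norm_num)
    have : (1/2 : ℝ) • x + (1/2 : ℝ) • (-x) = 0 := by
      module
    rw [this] at hm
    have : p 0 ≤ p x := hm
    linarith [hp0 ▸ this]
  -- key lemma for positive scalars
  have keypos : ∀ (x y : Fin n → ℝ) (s t : ℝ), 0 < s → 0 < t →
      p x ≤ s ^ d → p y ≤ t ^ d → p (x + y) ≤ (s + t) ^ d := by
    intro x y s t hs ht hx hy
    have hst : 0 < s + t := by linarith
    have hu : p (s⁻¹ • x) ≤ 1 := by
      rw [hhom]
      rw [inv_pow, inv_mul_le_iff₀ (by positivity), mul_one]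
      exact hx
    have hv : p (t⁻¹ • y) ≤ 1 := by
      rw [hhom]
      rw [inv_pow, inv_mul_le_iff₀ (by positivity), mul_one]
      exact hy
    have hm := hq 1 hu hv (by positivity : (0:ℝ) ≤ s / (s + t))
      (by positivity : (0:ℝ) ≤ t / (s + t)) (by field_simp)
    have heq : (s / (s + t)) • (s⁻¹ • x) + (t / (s + t)) • (t⁻¹ • y)
        = (s + t)⁻¹ • (x + y) := by
      rw [smul_smul, smul_smul, smul_add]
      congr 1 <;> congr 1 <;> field_simp <;> ring
    rw [heq] at hm
    have : p (x + y) = (s + t) ^ d * p ((s + t)⁻¹ • (x + y)) := by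
      rw [← hhom, smul_smul, mul_inv_cancel₀ hst.ne', one_smul]
    rw [this]
    calc (s + t) ^ d * p ((s + t)⁻¹ • (x + y)) ≤ (s + t) ^ d * 1 := by
          exact mul_le_mul_of_nonneg_left hm (by positivity)
      _ = (s + t) ^ d := mul_one _
  -- key lemma for nonneg scalars, via ε-limit
  have key : ∀ (x y : Fin n → ℝ) (s t : ℝ), 0 ≤ s → 0 ≤ t →
      p x ≤ s ^ d → p y ≤ t ^ d → p (x + y) ≤ (s + t) ^ d := by
    intro x y s t hs ht hx hy
    have hε : ∀ ε : ℝ, 0 < ε → p (x + y) ≤ (s + ε + (t + ε)) ^ d := by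
      intro ε hε
      exact keypos x y (s + ε) (t + ε) (by linarith) (by linarith)
        (hx.trans (pow_le_pow_left₀ hs (by linarith) d))
        (hy.trans (pow_le_pow_left₀ ht (by linarith) d))
    have htend : Filter.Tendsto (fun ε : ℝ => (s + ε + (t + ε)) ^ d)
        (nhdsWithin 0 (Set.Ioi 0)) (nhds ((s + t) ^ d)) := by
      have : Filter.Tendsto (fun ε : ℝ => (s + ε + (t + ε)) ^ d)
          (nhds 0) (nhds ((s + 0 + (t + 0)) ^ d)) := by
        apply Filter.Tendsto.pow
        exact ((continuous_const.add continuous_id).add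
          (continuous_const.add continuous_id)).tendsto 0
      simpa using this.mono_left nhdsWithin_le_nhds
    refine ge_of_tendsto htend ?_
    filter_upwards [self_mem_nhdsWithin] with ε (hε' : ε ∈ Set.Ioi 0)
    exact hε ε hε'
  -- finish
  refine ⟨convex_univ, ?_⟩
  intro a _ b _ μ ν hμ hν hμν
  set qa := (p a) ^ (1 / (d : ℝ)) with hqa
  set qb := (p b) ^ (1 / (d : ℝ)) with hqb
  have hqa0 : 0 ≤ qa := Real.rpow_nonneg (hpos a) _
  have hqb0 : 0 ≤ qb := Real.rpow_nonneg (hpos b) _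
  have hqad : qa ^ d = p a := by
    rw [hqa, ← Real.rpow_natCast (_ ^ _) d, ← Real.rpow_mul (hpos a)]
    rw [one_div, inv_mul_cancel₀ (by exact_mod_cast hd0), Real.rpow_one]
  have hqbd : qb ^ d = p b := by
    rw [hqb, ← Real.rpow_natCast (_ ^ _) d, ← Real.rpow_mul (hpos b)]
    rw [one_div, inv_mul_cancel₀ (by exact_mod_cast hd0), Real.rpow_one]
  have h1 : p (μ • a) ≤ (μ * qa) ^ d := by
    rw [hhom, mul_pow, hqad]
  have h2 : p (ν • b) ≤ (ν * qb) ^ d := by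
    rw [hhom, mul_pow, hqbd]
  have hmain := key (μ • a) (ν • b) (μ * qa) (ν * qb)
    (by positivity) (by positivity) h1 h2
  have hpow := (Even.convexOn_pow hd).2 (Set.mem_univ qa) (Set.mem_univ qb) hμ hν hμν
  simp only [smul_eq_mul] at hpow
  calc p (μ • a + ν • b) ≤ (μ * qa + ν * qb) ^ d := hmain
    _ ≤ μ * qa ^ d + ν * qb ^ d := hpow
    _ = μ * p a + ν * p b := by rw [hqad, hqbd]
end

section
/- For a homogeneous function p : ℝⁿ → ℝ of even degree d ≥ 1 that is continuous, quasiconvexity, pseudoconvexity, and convexity are all equivalent. -/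
/-!
Quasiconvexity makes `{p ≤ 1}` convex, and evenness makes `p` symmetric, so `p ≥ 0` (compare `x`,
`-x` and their midpoint `0`). Then `q = p ^ (1 / d)` is absolutely homogeneous of degree one with
convex unit sublevel set `{q ≤ 1} = {p ≤ 1}`, hence a seminorm (the Minkowski functional of that
set), and `p = q ^ d` is convex as a power of a nonnegative convex function. Pseudoconvexity gives
quasiconvexity because at an interior maximum of `p` on a segment the directional derivative
vanishes, and convexity gives pseudoconvexity through the first-order inequality along lines.
-/

open Set AffineMap

section SublinearOfConvexUnitBall

variable {E : Type*} [AddCommGroup E] [Module ℝ E]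

theorem add_le_of_convex_setOf_le_one {q : E → ℝ} (hq0 : ∀ x, 0 ≤ q x)
    (hsmul : ∀ c : ℝ, 0 < c → ∀ x, q (c • x) = c * q x) (hK : Convex ℝ {x | q x ≤ 1})
    (x y : E) : q (x + y) ≤ q x + q y := by
  have mem_K {s : ℝ} {z : E} (hz : q z < s) : s⁻¹ • z ∈ {x | q x ≤ 1} := by
    have hs : 0 < s := (hq0 z).trans_lt hz
    rw [mem_ofPred_eq, hsmul _ (inv_pos.2 hs), inv_mul_le_one₀ hs]
    exact hz.le
  have key {s r : ℝ} (hs : q x < s) (hr : q y < r) : q (x + y) ≤ s + r := by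
    have hs0 : 0 < s := (hq0 x).trans_lt hs
    have hr0 : 0 < r := (hq0 y).trans_lt hr
    -- `x + y` is `s + r` times a convex combination of `s⁻¹ • x` and `r⁻¹ • y`
    have hcomb := hK (mem_K hs) (mem_K hr) (a := s / (s + r)) (b := r / (s + r))
      (by positivity) (by positivity) (by field_simp)
    have heq : x + y = (s + r) • ((s / (s + r)) • s⁻¹ • x + (r / (s + r)) • r⁻¹ • y) := by
      have hx : (s + r) * (s / (s + r)) * s⁻¹ = 1 := by field_simp
      have hy : (s + r) * (r / (s + r)) * r⁻¹ = 1 := by field_simp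
      rw [smul_add, smul_smul, smul_smul, smul_smul, smul_smul, hx, hy, one_smul, one_smul]
    calc q (x + y) = (s + r) * q _ := by rw [heq, hsmul _ (by positivity)]
      _ ≤ s + r := mul_le_of_le_one_right (by positivity) hcomb
  refine le_of_forall_pos_le_add fun ε hε => ?_
  linarith [key (s := q x + ε / 2) (r := q y + ε / 2) (by linarith) (by linarith)]

end SublinearOfConvexUnitBall

section EvenHomogeneous

variable {E : Type*} [AddCommGroup E] [Module ℝ E] {d : ℕ} {p : E → ℝ}

theorem nonneg_of_quasiconvexOn_of_homogeneous (hd : Even d) (hd0 : d ≠ 0)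
    (hhom : ∀ (c : ℝ) (x : E), p (c • x) = c ^ d * p x) (hq : QuasiconvexOn ℝ univ p) (x : E) :
    0 ≤ p x := by
  have hp0 : p 0 = 0 := by simpa [zero_pow hd0] using hhom 0 0
  have hneg : p (-x) = p x := by rw [← neg_one_smul ℝ x, hhom, hd.neg_one_pow, one_mul]
  have hmid := (quasiconvexOn_iff_le_max.1 hq).2 (mem_univ x) (mem_univ (-x))
    (by norm_num : (0 : ℝ) ≤ 1 / 2) (by norm_num : (0 : ℝ) ≤ 1 / 2) (by norm_num)
  rwa [← smul_add, add_neg_cancel, smul_zero, hp0, hneg, max_self] at hmid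

theorem rpow_inv_smul_of_homogeneous (hd : Even d) (hd0 : d ≠ 0) (hp0 : ∀ x, 0 ≤ p x)
    (hhom : ∀ (c : ℝ) (x : E), p (c • x) = c ^ d * p x) (c : ℝ) (x : E) :
    p (c • x) ^ (d⁻¹ : ℝ) = |c| * p x ^ (d⁻¹ : ℝ) := by
  rw [hhom, ← hd.pow_abs, Real.mul_rpow (by positivity) (hp0 x),
    Real.pow_rpow_inv_natCast (abs_nonneg c) hd0]

theorem convexOn_rpow_inv_of_quasiconvexOn_of_homogeneous (hd : Even d) (hd0 : d ≠ 0)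
    (hhom : ∀ (c : ℝ) (x : E), p (c • x) = c ^ d * p x) (hq : QuasiconvexOn ℝ univ p) :
    ConvexOn ℝ univ fun x => p x ^ (d⁻¹ : ℝ) := by
  have hp0 := nonneg_of_quasiconvexOn_of_homogeneous hd hd0 hhom hq
  have hsmul := rpow_inv_smul_of_homogeneous hd hd0 hp0 hhom
  have hK : Convex ℝ {x | p x ^ (d⁻¹ : ℝ) ≤ 1} := by
    convert hq 1 using 1
    ext x
    simp only [mem_ofPred_eq, mem_univ, true_and]
    rw [← pow_le_one_iff_of_nonneg (Real.rpow_nonneg (hp0 x) _) hd0,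
      Real.rpow_inv_natCast_pow (hp0 x) hd0]
  have hadd := add_le_of_convex_setOf_le_one (fun x => Real.rpow_nonneg (hp0 x) _)
    (fun c hc x => by rw [hsmul, abs_of_pos hc]) hK
  exact (Seminorm.of (𝕜 := ℝ) _ hadd hsmul).convexOn

theorem convexOn_of_quasiconvexOn_of_homogeneous (hd : Even d) (hd0 : d ≠ 0)
    (hhom : ∀ (c : ℝ) (x : E), p (c • x) = c ^ d * p x) (hq : QuasiconvexOn ℝ univ p) :
    ConvexOn ℝ univ p := by
  have hp0 := nonneg_of_quasiconvexOn_of_homogeneous hd hd0 hhom hq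
  refine ((convexOn_rpow_inv_of_quasiconvexOn_of_homogeneous hd hd0 hhom hq).pow
    (fun x _ => Real.rpow_nonneg (hp0 x) _) d).congr fun x _ => ?_
  exact Real.rpow_inv_natCast_pow (hp0 x) hd0

end EvenHomogeneous

section Pseudoconvex

variable {E : Type*} [NormedAddCommGroup E] [NormedSpace ℝ E] {p : E → ℝ}

theorem hasDerivAt_comp_lineMap {x y : E} {t : ℝ} (hp : DifferentiableAt ℝ p (lineMap x y t)) :
    HasDerivAt (fun t : ℝ => p (lineMap x y t)) (fderiv ℝ p (lineMap x y t) (y - x)) t :=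
  hp.hasFDerivAt.comp_hasDerivAt t hasDerivAt_lineMap

theorem ConvexOn.add_fderiv_le (hc : ConvexOn ℝ univ p) {x : E} (hp : DifferentiableAt ℝ p x)
    (y : E) : p x + fderiv ℝ p x (y - x) ≤ p y := by
  have hline : ConvexOn ℝ univ fun t : ℝ => p (lineMap x y t) :=
    hc.comp_affineMap (lineMap x y)
  have hslope := hline.le_slope_of_hasDerivAt (mem_univ 0) (mem_univ 1) zero_lt_one
    (hasDerivAt_comp_lineMap (by simpa using hp))
  simp only [lineMap_apply_zero, lineMap_apply_one, slope_def_field, sub_zero, div_one] at hslope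
  linarith

theorem lineMap_le_max_of_pseudoconvex (hp : Differentiable ℝ p)
    (hps : ∀ x y, 0 ≤ fderiv ℝ p x (y - x) → p x ≤ p y) (x y : E) {t : ℝ} (ht : t ∈ Icc 0 1) :
    p (lineMap x y t) ≤ max (p x) (p y) := by
  have hcont : Continuous fun t : ℝ => p (lineMap x y t) :=
    hp.continuous.comp lineMap_continuous
  obtain ⟨t₀, ht₀, hmax⟩ :=
    isCompact_Icc.exists_isMaxOn (nonempty_Icc.2 zero_le_one) hcont.continuousOn
  refine (hmax ht).trans ?_
  rcases ht₀.1.eq_or_lt with rfl | h0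
  · simp
  rcases ht₀.2.eq_or_lt with rfl | h1
  · simp
  -- at an interior maximum the directional derivative vanishes, so pseudoconvexity applies
  have hderiv := (hmax.isLocalMax (Icc_mem_nhds h0 h1)).hasDerivAt_eq_zero
    (hasDerivAt_comp_lineMap (hp _))
  have hy : 0 ≤ fderiv ℝ p (lineMap x y t₀) (y - lineMap x y t₀) := by
    rw [← vsub_eq_sub, right_vsub_lineMap, vsub_eq_sub, map_smul, hderiv, smul_zero]
  exact (hps _ _ hy).trans (le_max_right _ _)

theorem quasiconvexOn_univ_of_pseudoconvex (hp : Differentiable ℝ p)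
    (hps : ∀ x y, 0 ≤ fderiv ℝ p x (y - x) → p x ≤ p y) : QuasiconvexOn ℝ univ p := by
  refine quasiconvexOn_iff_le_max.2 ⟨convex_univ, fun x _ y _ a b _ hb hab => ?_⟩
  have hline : a • x + b • y = lineMap x y b := by
    rw [lineMap_apply_module, ← hab, add_sub_cancel_right]
  rw [hline]
  exact lineMap_le_max_of_pseudoconvex hp hps x y ⟨hb, by linarith⟩

end Pseudoconvex

theorem stmt_4 (n d : ℕ) (p : EuclideanSpace ℝ (Fin n) → ℝ)
    (hp : ContDiff ℝ 1 p) (hd : Even d) (hd1 : 1 ≤ d)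
    (hhom : ∀ (c : ℝ) (x : EuclideanSpace ℝ (Fin n)), p (c • x) = c ^ d * p x) :
    ((∀ α : ℝ, Convex ℝ {x : EuclideanSpace ℝ (Fin n) | p x ≤ α}) ↔ ConvexOn ℝ Set.univ p) ∧
    ((∀ x y : EuclideanSpace ℝ (Fin n),
        (0 : ℝ) ≤ inner ℝ (gradient p x) (y - x) → p x ≤ p y) ↔ ConvexOn ℝ Set.univ p) := by
  have hdiff : Differentiable ℝ p := hp.differentiable one_ne_zero
  have quasi_iff : QuasiconvexOn ℝ univ p ↔ ConvexOn ℝ univ p :=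
    ⟨convexOn_of_quasiconvexOn_of_homogeneous hd (by omega) hhom, ConvexOn.quasiconvexOn⟩
  simp only [inner_gradient_left]
  refine ⟨?_, fun hps => quasi_iff.1 (quasiconvexOn_univ_of_pseudoconvex hdiff hps),
    fun hc x y hxy => ?_⟩
  · simpa [QuasiconvexOn] using quasi_iff
  · linarith [hc.add_fderiv_le (hdiff x) y]
end

section
/- Let p : ℝⁿ → ℝ be quasiconvex, continuous, and homogeneous of even degree d ≥ 2, and suppose p(a) > 0 and p(b) > 0. Then p(a+b) ≤ (p(a)^{1/d} + p(b)^{1/d})^d. -/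
/-!
Rescaling `a` and `b` by `p a ^ (1/d)` and `p b ^ (1/d)` puts them in the sublevel set
`{p ≤ 1}`; by convexity so is their convex combination with weights proportional to those
scales, which is a positive multiple of `a + b`. Homogeneity turns this back into the bound:
`p ^ (1/d)` is subadditive.
-/

section PositivelyHomogeneous

variable {E : Type*} [AddCommGroup E] [Module ℝ E] {d : ℕ} {p : E → ℝ}

lemma apply_inv_smul_le_one_iff (hhom : ∀ c : ℝ, 0 < c → ∀ x, p (c • x) = c ^ d * p x)
    {c : ℝ} (hc : 0 < c) (x : E) : p (c⁻¹ • x) ≤ 1 ↔ p x ≤ c ^ d := by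
  have hcd : 0 < c ^ d := pow_pos hc d
  rw [hhom _ (inv_pos.mpr hc), inv_pow, inv_mul_le_iff₀ hcd, mul_one]

lemma apply_add_le_add_pow (hhom : ∀ c : ℝ, 0 < c → ∀ x, p (c • x) = c ^ d * p x)
    (hq : Convex ℝ {x | p x ≤ 1}) {a b : E} {α β : ℝ} (hα : 0 < α) (hβ : 0 < β)
    (ha : p a ≤ α ^ d) (hb : p b ≤ β ^ d) : p (a + b) ≤ (α + β) ^ d := by
  have hαβ : 0 < α + β := add_pos hα hβ
  have hcomb : (α / (α + β)) • (α⁻¹ • a) + (β / (α + β)) • (β⁻¹ • b)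
      = (α + β)⁻¹ • (a + b) := by
    rw [smul_smul, smul_smul, smul_add]
    congr 2 <;> field_simp
  have hmem := hq ((apply_inv_smul_le_one_iff hhom hα a).mpr ha)
    ((apply_inv_smul_le_one_iff hhom hβ b).mpr hb) (div_pos hα hαβ).le (div_pos hβ hαβ).le
    (by rw [← add_div, div_self hαβ.ne'])
  rw [hcomb] at hmem
  exact (apply_inv_smul_le_one_iff hhom hαβ _).mp hmem

end PositivelyHomogeneous

theorem stmt_5_general (n d : ℕ) (p : (Fin n → ℝ) → ℝ)
    (hd2 : 2 ≤ d)
    (hhom : ∀ (c : ℝ) (x : Fin n → ℝ), p (c • x) = c ^ d * p x)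
    (hq : ∀ α : ℝ, Convex ℝ {x : Fin n → ℝ | p x ≤ α})
    (a b : Fin n → ℝ) (ha : 0 < p a) (hb : 0 < p b) :
    p (a + b) ≤ (p a ^ ((1 : ℝ) / d) + p b ^ ((1 : ℝ) / d)) ^ d := by
  have hd : d ≠ 0 := by omega
  have hroot {t : ℝ} (ht : 0 < t) : (t ^ ((1 : ℝ) / d)) ^ d = t := by
    rw [one_div, Real.rpow_inv_natCast_pow ht.le hd]
  exact apply_add_le_add_pow (fun c _ x => hhom c x) (hq 1) (Real.rpow_pos_of_pos ha _)
    (Real.rpow_pos_of_pos hb _) (hroot ha).ge (hroot hb).ge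

theorem stmt_5 (n d : ℕ) (p : (Fin n → ℝ) → ℝ) (hp : Continuous p)
    (hd : Even d) (hd2 : 2 ≤ d)
    (hhom : ∀ (c : ℝ) (x : Fin n → ℝ), p (c • x) = c ^ d * p x)
    (hq : ∀ α : ℝ, Convex ℝ {x : Fin n → ℝ | p x ≤ α})
    (a b : Fin n → ℝ) (ha : 0 < p a) (hb : 0 < p b) :
    p (a + b) ≤ (p a ^ ((1 : ℝ) / d) + p b ^ ((1 : ℝ) / d)) ^ d :=
  stmt_5_general n d p hd2 hhom hq a b ha hb
end

section
/- For a quadratic polynomial p(x) = ½ xᵀQx + qᵀx + c with Q symmetric, quasiconvexity is equivalent to convexity, which is equivalent to Q being positive semidefinite. -/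
/-!
Convexity implies quasiconvexity, and positive semidefiniteness implies convexity through the
identity `a p(x) + b p(y) = p(a x + b y) + (a b / 2) (x - y)ᵀ Q (x - y)` for `a + b = 1`.
Conversely, if `vᵀ Q v < 0` then `t ↦ p (t v)` is a parabola opening downwards: the two points at
distance `1` from its vertex lie in a sublevel set that misses the vertex, their midpoint.
-/

open Matrix

theorem QuasiconvexOn.comp_linearMap {𝕜 E F β : Type*} [Semiring 𝕜] [PartialOrder 𝕜]
    [AddCommMonoid E] [AddCommMonoid F] [Module 𝕜 E] [Module 𝕜 F] [LE β] {f : F → β} {s : Set F}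
    (hf : QuasiconvexOn 𝕜 s f) (g : E →ₗ[𝕜] F) : QuasiconvexOn 𝕜 (g ⁻¹' s) (f ∘ g) :=
  fun r ↦ (hf r).linear_preimage g

theorem not_quasiconvexOn_univ_quadratic {𝕜 : Type*} [Field 𝕜] [LinearOrder 𝕜]
    [IsStrictOrderedRing 𝕜] {a b c : 𝕜} (ha : a < 0) :
    ¬ QuasiconvexOn 𝕜 Set.univ (fun t ↦ a * t ^ 2 + b * t + c) := by
  intro h
  obtain ⟨t₀, hvertex⟩ : ∃ t₀, 2 * a * t₀ + b = 0 := ⟨-b / (2 * a), by field_simp [ha.ne]; ring⟩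
  have hmid := (quasiconvexOn_iff_le_max.1 h).2 (Set.mem_univ (t₀ + 1)) (Set.mem_univ (t₀ - 1))
    (by norm_num : (0 : 𝕜) ≤ 1 / 2) (by norm_num : (0 : 𝕜) ≤ 1 / 2) (by norm_num)
  have hcentre : (1 / 2 : 𝕜) • (t₀ + 1) + (1 / 2 : 𝕜) • (t₀ - 1) = t₀ := by
    simp only [smul_eq_mul]; ring
  rw [hcentre, le_max_iff] at hmid
  rcases hmid with hle | hle <;> nlinarith

noncomputable def quadraticFun {ι : Type*} [Fintype ι] (Q : Matrix ι ι ℝ) (q : ι → ℝ) (c : ℝ)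
    (x : ι → ℝ) : ℝ :=
  1 / 2 * (x ⬝ᵥ Q *ᵥ x) + q ⬝ᵥ x + c

section QuadraticFun

variable {ι : Type*} [Fintype ι] (Q : Matrix ι ι ℝ) (q : ι → ℝ) (c : ℝ)

theorem quadraticFun_smul (t : ℝ) (v : ι → ℝ) :
    quadraticFun Q q c (t • v) = 1 / 2 * (v ⬝ᵥ Q *ᵥ v) * t ^ 2 + q ⬝ᵥ v * t + c := by
  simp only [quadraticFun, mulVec_smul, dotProduct_smul, smul_dotProduct, smul_eq_mul]
  ring

theorem quadraticFun_add_smul_sub {a b : ℝ} (hab : a + b = 1) (x y : ι → ℝ) :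
    a * quadraticFun Q q c x + b * quadraticFun Q q c y =
      quadraticFun Q q c (a • x + b • y) + a * b / 2 * ((x - y) ⬝ᵥ Q *ᵥ (x - y)) := by
  obtain rfl : b = 1 - a := by linarith
  simp only [quadraticFun, mulVec_add, mulVec_sub, mulVec_smul, add_dotProduct, dotProduct_add,
    sub_dotProduct, dotProduct_sub, smul_dotProduct, dotProduct_smul, smul_eq_mul]
  ring

variable {Q}

theorem convexOn_quadraticFun (hQ : Q.PosSemidef) : ConvexOn ℝ Set.univ (quadraticFun Q q c) := by
  refine ⟨convex_univ, fun x _ y _ a b ha hb hab ↦ ?_⟩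
  rw [smul_eq_mul, smul_eq_mul, quadraticFun_add_smul_sub Q q c hab]
  have hxy := hQ.dotProduct_mulVec_nonneg (x - y)
  rw [star_trivial] at hxy
  have := mul_nonneg (mul_nonneg ha hb) hxy
  linarith

theorem posSemidef_of_quasiconvexOn (hQ : Q.IsSymm)
    (h : QuasiconvexOn ℝ Set.univ (quadraticFun Q q c)) : Q.PosSemidef := by
  refine .of_dotProduct_mulVec_nonneg (isHermitian_iff_isSymm.2 hQ) fun v ↦ ?_
  rw [star_trivial]
  by_contra! hv
  have hline := h.comp_linearMap (LinearMap.toSpanSingleton ℝ _ v)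
  refine not_quasiconvexOn_univ_quadratic (b := q ⬝ᵥ v) (c := c)
    (by linarith : 1 / 2 * (v ⬝ᵥ Q *ᵥ v) < 0) ?_
  simpa [Function.comp_def, quadraticFun_smul] using hline

end QuadraticFun

theorem stmt_11 (n : ℕ) (Q : Matrix (Fin n) (Fin n) ℝ) (hQ : Q.IsSymm)
    (q : Fin n → ℝ) (c : ℝ)
    (p : (Fin n → ℝ) → ℝ)
    (hp : ∀ x, p x = (1 / 2) * (x ⬝ᵥ Q.mulVec x) + q ⬝ᵥ x + c) :
    ((∀ α : ℝ, Convex ℝ {x : Fin n → ℝ | p x ≤ α}) ↔ ConvexOn ℝ Set.univ p) ∧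
    (ConvexOn ℝ Set.univ p ↔ Q.PosSemidef) := by
  obtain rfl : p = quadraticFun Q q c := funext hp
  have hquasi : (∀ α : ℝ, Convex ℝ {x | quadraticFun Q q c x ≤ α}) ↔
      QuasiconvexOn ℝ Set.univ (quadraticFun Q q c) := by
    simp only [QuasiconvexOn, Set.mem_univ, true_and]
  have hpsd := posSemidef_of_quasiconvexOn q c hQ
  rw [hquasi]
  exact ⟨⟨fun h ↦ convexOn_quadraticFun q c (hpsd h), ConvexOn.quasiconvexOn⟩,
    ⟨fun h ↦ hpsd h.quasiconvexOn, convexOn_quadraticFun q c⟩⟩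
end

section
/- Let p : ℝⁿ → ℝ be a continuous homogeneous polynomial of even degree 4 and d ≥ 4 even; define q(x, s) = p(x) + s^d. If p is not convex (equivalently, not quasiconvex), then q is not quasiconvex. -/
/-!
If the sublevel sets of `q (x, s) = p x + s ^ d` are convex, then `p` is convex. Given `x`, `y`
and a level `M` above `p x` and `p y`, the points `(x, (M - p x) ^ (1/d))` and
`(y, (M - p y) ^ (1/d))` lie in `{q ≤ M}`, hence so does their convex combination with weights
`a`, `b`. This gives `p (a • x + b • y) ≤ M - (a (M - p x) ^ (1/d) + b (M - p y) ^ (1/d)) ^ d`,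
and the right-hand side tends to `a p x + b p y` as `M → ∞`.
-/

open Filter Topology Set

lemma hasDerivAt_one_sub_mul_rpow (C r : ℝ) :
    HasDerivAt (fun s : ℝ => (1 - C * s) ^ r) (-C * r) 0 := by
  have h : HasDerivAt (fun s : ℝ => 1 - C * s) (-C) 0 := by
    simpa using ((hasDerivAt_id (0 : ℝ)).const_mul C).const_sub 1
  simpa [mul_comm] using h.rpow_const (p := r) (Or.inl (by norm_num))

lemma hasDerivAt_mean_rpow_inv_pow {d : ℕ} (hd : d ≠ 0) {a b : ℝ} (hab : a + b = 1) (A B : ℝ) :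
    HasDerivAt
      (fun s : ℝ => (a * (1 - A * s) ^ (d⁻¹ : ℝ) + b * (1 - B * s) ^ (d⁻¹ : ℝ)) ^ d)
      (-(a * A + b * B)) 0 := by
  have hmean := ((hasDerivAt_one_sub_mul_rpow A (d⁻¹ : ℝ)).const_mul a).fun_add
    ((hasDerivAt_one_sub_mul_rpow B (d⁻¹ : ℝ)).const_mul b)
  refine (hmean.fun_pow d).congr_deriv ?_
  simp only [mul_zero, sub_zero, Real.one_rpow, mul_one, hab, one_pow]
  field_simp
  ring

lemma sub_mean_rpow_inv_pow_eq {d : ℕ} (hd : d ≠ 0) (a b : ℝ) {A B M : ℝ} (hM : 0 < M)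
    (hA : A ≤ M) (hB : B ≤ M) :
    M - (a * (M - A) ^ (d⁻¹ : ℝ) + b * (M - B) ^ (d⁻¹ : ℝ)) ^ d =
      M * (1 - (a * (1 - A * M⁻¹) ^ (d⁻¹ : ℝ) + b * (1 - B * M⁻¹) ^ (d⁻¹ : ℝ)) ^ d) := by
  have factor : ∀ C ≤ M, (M - C) ^ (d⁻¹ : ℝ) = M ^ (d⁻¹ : ℝ) * (1 - C * M⁻¹) ^ (d⁻¹ : ℝ) := by
    intro C hC
    rw [← Real.mul_rpow hM.le]
    · congr 1
      field_simp
    · rw [sub_nonneg]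
      exact mul_inv_le_one_of_le₀ hC hM.le
  rw [factor A hA, factor B hB,
    show ∀ u v : ℝ, a * (M ^ (d⁻¹ : ℝ) * u) + b * (M ^ (d⁻¹ : ℝ) * v)
      = M ^ (d⁻¹ : ℝ) * (a * u + b * v) from fun u v => by ring,
    mul_pow, Real.rpow_inv_natCast_pow hM.le hd]
  ring

/-- Substituting `s = M⁻¹`, the expression is minus the difference quotient at `0` of the function
in `hasDerivAt_mean_rpow_inv_pow`. -/
lemma tendsto_sub_mean_rpow_inv_pow {d : ℕ} (hd : d ≠ 0) {a b : ℝ} (hab : a + b = 1)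
    (A B : ℝ) :
    Tendsto (fun M : ℝ => M - (a * (M - A) ^ (d⁻¹ : ℝ) + b * (M - B) ^ (d⁻¹ : ℝ)) ^ d)
      atTop (𝓝 (a * A + b * B)) := by
  have hslope := hasDerivAt_iff_tendsto_slope.mp (hasDerivAt_mean_rpow_inv_pow hd hab A B)
  have hinv : Tendsto (fun M : ℝ => M⁻¹) atTop (𝓝[≠] 0) :=
    tendsto_inv_atTop_nhdsGT_zero.mono_right (nhdsWithin_mono _ fun _ hx => ne_of_gt hx)
  have hlim := (hslope.comp hinv).neg
  rw [neg_neg] at hlim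
  refine hlim.congr' ?_
  filter_upwards [eventually_gt_atTop 0, eventually_ge_atTop A, eventually_ge_atTop B]
    with M hM hA hB
  rw [sub_mean_rpow_inv_pow_eq hd a b hM hA hB, Function.comp_apply, slope_def_field]
  simp only [mul_zero, sub_zero, Real.one_rpow, mul_one, hab, one_pow]
  field_simp
  ring

theorem convexOn_of_convex_setOf_add_pow_le {E : Type*} [AddCommGroup E] [Module ℝ E]
    {f : E → ℝ} {d : ℕ} (hd : d ≠ 0)
    (h : ∀ α : ℝ, Convex ℝ {z : E × ℝ | f z.1 + z.2 ^ d ≤ α}) :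
    ConvexOn ℝ univ f := by
  refine ⟨convex_univ, fun x _ y _ a b ha hb hab => ?_⟩
  refine ge_of_tendsto (tendsto_sub_mean_rpow_inv_pow hd hab (f x) (f y)) ?_
  filter_upwards [eventually_ge_atTop (f x), eventually_ge_atTop (f y)] with M hx hy
  have lift_mem : ∀ z, f z ≤ M →
      (z, (M - f z) ^ (d⁻¹ : ℝ)) ∈ {z : E × ℝ | f z.1 + z.2 ^ d ≤ M} := fun z hz => by
    simp [Real.rpow_inv_natCast_pow (sub_nonneg.2 hz) hd]
  have hcomb := h M (lift_mem x hx) (lift_mem y hy) ha hb hab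
  simp only [mem_ofPred_eq, Prod.smul_mk, Prod.mk_add_mk, smul_eq_mul] at hcomb ⊢
  linarith

theorem stmt_15_general (n d : ℕ) (hd4 : 4 ≤ d)
    (p : (Fin n → ℝ) → ℝ)
    (hnc : ¬ ConvexOn ℝ Set.univ p)
    (q : (Fin n → ℝ) × ℝ → ℝ) (hq : ∀ z, q z = p z.1 + z.2 ^ d) :
    ¬ (∀ α : ℝ, Convex ℝ {z : (Fin n → ℝ) × ℝ | q z ≤ α}) := by
  obtain rfl : q = fun z => p z.1 + z.2 ^ d := funext hq
  exact fun h => hnc (convexOn_of_convex_setOf_add_pow_le (by omega) h)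

theorem stmt_15 (n d : ℕ) (hd : Even d) (hd4 : 4 ≤ d)
    (p : (Fin n → ℝ) → ℝ) (hp : Continuous p)
    (hhom : ∀ (c : ℝ) (x : Fin n → ℝ), p (c • x) = c ^ 4 * p x)
    (hnc : ¬ ConvexOn ℝ Set.univ p)
    (q : (Fin n → ℝ) × ℝ → ℝ) (hq : ∀ z, q z = p z.1 + z.2 ^ d) :
    ¬ (∀ α : ℝ, Convex ℝ {z : (Fin n → ℝ) × ℝ | q z ≤ α}) :=
  stmt_15_general n d hd4 p hnc q hq
end

section
/- Let p : ℝⁿ → ℝ be differentiable with p(x) = h(⟨ξ, x⟩) for some nonzero ξ ∈ ℝⁿ and a univariate polynomial h whose derivative h' has no real roots. Then p is pseudoconvex: for all x, y ∈ ℝⁿ, ⟨∇p(x), y − x⟩ ≥ 0 implies p(y) ≥ p(x). -/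
/-!
`h'` never vanishes, so by Darboux it has constant sign and `h` is strictly monotone. Since
`∇p x = h'(⟪ξ, x⟫) • ξ`, the hypothesis `0 ≤ ⟪∇p x, y - x⟫` reads `0 ≤ h'(⟪ξ, x⟫) (⟪ξ, y⟫ - ⟪ξ, x⟫)`:
`⟪ξ, y⟫` lies on the side of `⟪ξ, x⟫` where `h` increases.
-/

open scoped InnerProductSpace

variable {E : Type*} [NormedAddCommGroup E] [InnerProductSpace ℝ E] [CompleteSpace E]

def IsPseudoconvex (p : E → ℝ) : Prop :=
  ∀ x y, 0 ≤ ⟪gradient p x, y - x⟫_ℝ → p x ≤ p y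

theorem le_of_deriv_mul_sub_nonneg {f f' : ℝ → ℝ} (hf : ∀ t, HasDerivAt f (f' t) t)
    (hf' : ∀ t, f' t ≠ 0) {s t : ℝ} (hst : 0 ≤ f' s * (t - s)) : f s ≤ f t := by
  rcases hasDerivWithinAt_forall_lt_or_forall_gt_of_forall_ne convex_univ
    (fun t _ ↦ (hf t).hasDerivWithinAt) (fun t _ ↦ hf' t) with hneg | hpos
  · have hts : t ≤ s := by nlinarith [hneg s trivial]
    exact (strictAnti_of_hasDerivAt_neg hf fun t ↦ hneg t trivial).antitone hts
  · have hst : s ≤ t := by nlinarith [hpos s trivial]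
    exact (strictMono_of_hasDerivAt_pos hf fun t ↦ hpos t trivial).monotone hst

theorem HasDerivAt.hasGradientAt_comp_inner {f : ℝ → ℝ} {f' : ℝ} {ξ x : E}
    (hf : HasDerivAt f f' ⟪ξ, x⟫_ℝ) : HasGradientAt (fun z ↦ f ⟪ξ, z⟫_ℝ) (f' • ξ) x := by
  have hdual : InnerProductSpace.toDual ℝ E (f' • ξ) = f' • innerSL ℝ ξ := by
    ext v
    simp
  rw [hasGradientAt_iff_hasFDerivAt, hdual]
  exact hf.comp_hasFDerivAt x (innerSL ℝ ξ).hasFDerivAt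

theorem isPseudoconvex_comp_inner {f f' : ℝ → ℝ} (hf : ∀ t, HasDerivAt f (f' t) t)
    (hf' : ∀ t, f' t ≠ 0) (ξ : E) : IsPseudoconvex fun z ↦ f ⟪ξ, z⟫_ℝ := by
  intro x y hxy
  rw [(hf _).hasGradientAt_comp_inner.gradient, real_inner_smul_left, inner_sub_right] at hxy
  exact le_of_deriv_mul_sub_nonneg hf hf' hxy

theorem stmt_19_general (n : ℕ) (ξ : EuclideanSpace ℝ (Fin n))
    (h : Polynomial ℝ) (hder : ∀ t : ℝ, (Polynomial.derivative h).eval t ≠ 0)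
    (p : EuclideanSpace ℝ (Fin n) → ℝ)
    (hp : ∀ x, p x = h.eval (inner ℝ ξ x : ℝ)) :
    ∀ x y : EuclideanSpace ℝ (Fin n),
      (0 : ℝ) ≤ inner ℝ (gradient p x) (y - x) → p x ≤ p y := by
  obtain rfl : p = fun x ↦ h.eval ⟪ξ, x⟫_ℝ := funext hp
  exact isPseudoconvex_comp_inner (fun t ↦ h.hasDerivAt t) hder ξ

theorem stmt_19 (n : ℕ) (ξ : EuclideanSpace ℝ (Fin n)) (hξ : ξ ≠ 0)
    (h : Polynomial ℝ) (hder : ∀ t : ℝ, (Polynomial.derivative h).eval t ≠ 0)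
    (p : EuclideanSpace ℝ (Fin n) → ℝ) (hdiff : Differentiable ℝ p)
    (hp : ∀ x, p x = h.eval (inner ℝ ξ x : ℝ)) :
    ∀ x y : EuclideanSpace ℝ (Fin n),
      (0 : ℝ) ≤ inner ℝ (gradient p x) (y - x) → p x ≤ p y :=
  stmt_19_general n ξ h hder p hp
end
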